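/- arXiv:1210.2051 — 4 statements merged into one kernel-verified Lean document; each statement's English description precedes it below -/
import Mathlib

section
/- For every j ∈ ℕ there exists c ∈ ℕ, depending only on j, such that for every i ∈ ℕ, every TxtFex^i_j-learnable family of nonempty c.e. sets is TxtFext^{c·i}_j-learnable, i.e., TxtFex^i_j ⊆ TxtFext^{ci}_j. -/
open Filter

/-- The `a`-th computably enumerable set: the domain of the `a`-th partial
computable function, under the standard numbering via `Nat.Partrec.Code`. -/
def W (a : ℕ) : Set ℕ := {x | ((Denumerable.ofNat Nat.Partrec.Code a).eval x).Dom}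

/-- The stage-`s` approximation `W_{a,s}` of the `a`-th c.e. set. -/
def Wstage (a s : ℕ) : Set ℕ :=
  {x | (Nat.Partrec.Code.evaln s (Denumerable.ofNat Nat.Partrec.Code a) x).isSome}

/-- `A` is computably enumerable. -/
def IsCE (A : Set ℕ) : Prop := ∃ a : ℕ, A = W a

/-- The content (set of values) of a finite sequence. -/
def content (σ : List ℕ) : Set ℕ := {x | x ∈ σ}

/-- The initial segment `f↾n` of a text `f`. -/
def seg (f : ℕ → ℕ) (n : ℕ) : List ℕ := (List.range n).map f

/-- `A =* B` : the symmetric difference of `A` and `B` is finite. -/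
def eqStar (A B : Set ℕ) : Prop := (symmDiff A B).Finite

/-- `A =^i B` : the symmetric difference of `A` and `B` has cardinality at most `i`. -/
def eqWithin (i : ℕ) (A B : Set ℕ) : Prop :=
  (symmDiff A B).Finite ∧ (symmDiff A B).ncard ≤ i

/-- Accuracy parameter: `some i` means `=^i`, `none` means `=*`. -/
def Accurate : Option ℕ → Set ℕ → Set ℕ → Prop
  | none => eqStar
  | some i => eqWithin i

/-- Cardinality bound parameter: `some j` bounds `card S ≤ j`, `none` ( `*` ) is no bound. -/
def CardOK : Option ℕ → Finset ℕ → Prop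
  | none => fun _ => True
  | some j => fun S => S.card ≤ j

/-- `M` TxtFex^i_j-identifies the text `f`. -/
def FexIdentifies (i j : Option ℕ) (M : List ℕ → ℕ) (f : ℕ → ℕ) : Prop :=
  ∃ S : Finset ℕ, CardOK j S ∧ (∀ᶠ n in atTop, M (seg f n) ∈ S) ∧
    ∀ a ∈ S, Accurate i (W a) (Set.range f)

/-- `M` TxtFext^i_j-identifies the text `f`. -/
def FextIdentifies (i j : Option ℕ) (M : List ℕ → ℕ) (f : ℕ → ℕ) : Prop :=
  ∃ S : Finset ℕ, CardOK j S ∧ (∀ᶠ n in atTop, M (seg f n) ∈ S) ∧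
    (∀ a ∈ S, Accurate i (W a) (Set.range f)) ∧ (∀ a ∈ S, ∀ b ∈ S, W a = W b)

/-- `M` TxtFex^i_j-learns the set `A` : it identifies every text for `A`. -/
def FexLearnsSet (i j : Option ℕ) (M : List ℕ → ℕ) (A : Set ℕ) : Prop :=
  ∀ f : ℕ → ℕ, Set.range f = A → FexIdentifies i j M f

/-- `M` TxtFext^i_j-learns the set `A`. -/
def FextLearnsSet (i j : Option ℕ) (M : List ℕ → ℕ) (A : Set ℕ) : Prop :=
  ∀ f : ℕ → ℕ, Set.range f = A → FextIdentifies i j M f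

/-- `M` TxtFex^i_j-learns the family `𝓕`. -/
def FexLearnsFamily (i j : Option ℕ) (M : List ℕ → ℕ) (𝓕 : Set (Set ℕ)) : Prop :=
  ∀ A ∈ 𝓕, FexLearnsSet i j M A

/-- `M` TxtFext^i_j-learns the family `𝓕`. -/
def FextLearnsFamily (i j : Option ℕ) (M : List ℕ → ℕ) (𝓕 : Set (Set ℕ)) : Prop :=
  ∀ A ∈ 𝓕, FextLearnsSet i j M A

/-- `𝓕` is TxtFex^i_j-learnable: some computable learner learns it. -/
def FexLearnable (i j : Option ℕ) (𝓕 : Set (Set ℕ)) : Prop :=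
  ∃ M : List ℕ → ℕ, Computable M ∧ FexLearnsFamily i j M 𝓕

/-- `𝓕` is TxtFext^i_j-learnable. -/
def FextLearnable (i j : Option ℕ) (𝓕 : Set (Set ℕ)) : Prop :=
  ∃ M : List ℕ → ℕ, Computable M ∧ FextLearnsFamily i j M 𝓕

/-- A family of nonempty c.e. sets. -/
def NiceFamily (𝓕 : Set (Set ℕ)) : Prop := ∀ A ∈ 𝓕, A.Nonempty ∧ IsCE A

/-!
Let `M` TxtFex^i_j-learn the family and let `f` be a text for one of its sets `A`. The conjectures
that `M` makes infinitely often on `f` form a set `F` of at most `j` indices, each naming a set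
`=^i A`, so any two of them name sets `=^{2i}` each other. Ranking the earlier conjectures of `M`
by frequency, the `j` highest ranked ones eventually form a fixed list `T ⊇ F`.

On a conjecture `a` the new learner names the amalgam of `W a` with the sets `W b`, `b ∈ T`:
along every chain of distinct members of `T`, stage approximations of the head `W b` are added
as long as they add at most `2i` elements to what the rest of the chain has enumerated. Each link
of a chain then contributes at most `2i` errors and there are at most `2^j j!` chains, so the
amalgam is `=^{ci} A` with `c = 2^j j! (2j+1) + 1`. For `a, a' ∈ F`, `W a` adds at most `2i`
elements to `W a'`, so every chain anchored at `a` can be replayed, with `a` appended, from the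
anchor `a'`: the amalgams for `a` and `a'` coincide, and all final conjectures name one set.
-/

namespace TxtFex

open Nat.Partrec Code Encodable Denumerable

section General

lemma encard_le_of_forall_finset {α : Type*} {X : Set α} {k : ℕ}
    (h : ∀ F : Finset α, ↑F ⊆ X → F.card ≤ k) : X.encard ≤ k := by
  by_contra! hlt
  obtain ⟨t, htX, ht⟩ := Set.exists_subset_encard_eq (Order.add_one_le_of_lt hlt)
  have htfin : t.Finite := Set.finite_of_encard_eq_coe ht
  have hle := h htfin.toFinset (by simpa using htX)
  have hcard : htfin.toFinset.card = k + 1 := by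
    rw [← Nat.cast_inj (R := ℕ∞), ← Set.encard_coe_eq_coe_finsetCard, htfin.coe_toFinset,
      ht]
    rfl
  omega

lemma length_le_encard {α : Type*} {L : List α} (hL : L.Nodup) {S : Set α}
    (h : ∀ x ∈ L, x ∈ S) : (L.length : ℕ∞) ≤ S.encard := by
  classical
  rw [← List.toFinset_card_of_nodup hL, ← Set.encard_coe_eq_coe_finsetCard]
  exact Set.encard_le_encard fun x hx => h x (List.mem_toFinset.1 hx)

lemma length_filter_not_mem_anti {α : Type*} [DecidableEq α] {L D D' : List α} (h : D ⊆ D') :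
    (L.filter (· ∉ D')).length ≤ (L.filter (· ∉ D)).length :=
  (L.monotone_filter_right fun _ hy => by
    simp only [decide_eq_true_eq] at hy ⊢
    exact fun hD => hy (h hD)).length_le

lemma le_foldr_max {l : List ℕ} {b : ℕ} (h : b ∈ l) : b ≤ l.foldr max 0 :=
  List.le_max_of_le h le_rfl

lemma foldr_max_le {l : List ℕ} {B : ℕ} (h : ∀ b ∈ l, b ≤ B) : l.foldr max 0 ≤ B :=
  List.max_le_of_forall_le l B h

lemma eventuallyConst_of_monotone_of_bddAbove {f : ℕ → ℕ} (hf : Monotone f)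
    (hB : BddAbove (Set.range f)) : EventuallyConst f atTop := by
  obtain ⟨N, hN⟩ := Nat.sSup_mem (Set.range_nonempty f) hB
  refine eventuallyConst_atTop.2 ⟨N, fun n hn => le_antisymm ?_ (hf hn)⟩
  rw [hN]
  exact le_csSup hB ⟨n, rfl⟩

lemma eventuallyConst_filter_range {m : ℕ → ℕ} {p : ℕ → ℕ → Prop}
    [∀ n, DecidablePred (p n)] (hm : EventuallyConst m atTop)
    (hp : ∀ b, EventuallyConst (p · b) atTop) :
    EventuallyConst (fun n => (List.range (m n)).filter (p n ·)) atTop := by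
  classical
  obtain ⟨K, hK⟩ := eventuallyConst_iff_exists_eventuallyEq.1 hm
  choose q hq using fun b => eventuallyConst_iff_exists_eventuallyEq.1 (hp b)
  refine eventuallyConst_iff_exists_eventuallyEq.2 ⟨(List.range K).filter (q ·), ?_⟩
  filter_upwards [hK, (Finset.range K).eventually_all.2 fun b _ => hq b] with n hn hpq
  rw [hn]
  exact List.filter_congr fun b hb => by simp [hpq b (by simpa using hb)]

lemma primrecRel_mem {α : Type*} [Primcodable α] [DecidableEq α] :
    PrimrecRel fun (x : α) (l : List α) => x ∈ l :=
  (PrimrecRel.exists_mem_list (Primrec.eq.comp₂ Primrec₂.right Primrec₂.left)).swap.of_eq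
    fun _ _ => by simp

lemma primrecRel_subset {α : Type*} [Primcodable α] [DecidableEq α] :
    PrimrecRel fun (l l' : List α) => l ⊆ l' :=
  (PrimrecRel.forall_mem_list primrecRel_mem).of_eq fun _ _ => Iff.rfl

lemma primrec_count {α : Type*} [Primcodable α] [DecidableEq α] :
    Primrec₂ fun (l : List α) (a : α) => l.count a :=
  (Primrec.list_length.comp₂ (PrimrecRel.listFilter Primrec.eq)).of_eq fun l a => by
    simp [List.count_eq_countP, List.countP_eq_length_filter, Bool.beq_eq_decide_eq]

lemma primrecPred_nodup {α : Type*} [Primcodable α] [DecidableEq α] :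
    PrimrecPred (List.Nodup : List α → Prop) := by
  refine ((PrimrecRel.forall_mem_list (R := fun (a : α) (l : List α) => l.count a ≤ 1)
    (Primrec.nat_le.comp (primrec_count.comp Primrec.snd Primrec.fst) (Primrec.const 1))).comp
      Primrec.id Primrec.id).of_eq fun l => ?_
  rw [List.nodup_iff_count_le_one]
  refine ⟨fun h a => (em (a ∈ l)).elim (h a) fun ha => ?_, fun h a _ => h a⟩
  simp [List.count_eq_zero_of_not_mem ha]

lemma eqWithin_iff_encard_le {k : ℕ} {X A : Set ℕ} :
    eqWithin k X A ↔ (symmDiff X A).encard ≤ k :=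
  Set.encard_le_coe_iff_finite_ncard_le.symm

lemma encard_diff_le_of_eqWithin {k : ℕ} {X A : Set ℕ} (h : eqWithin k X A) :
    (X \ A).encard ≤ k ∧ (A \ X).encard ≤ k := by
  have h' := eqWithin_iff_encard_le.1 h
  rw [Set.symmDiff_def] at h'
  exact ⟨(Set.encard_le_encard Set.subset_union_left).trans h',
    (Set.encard_le_encard Set.subset_union_right).trans h'⟩

lemma encard_diff_le_of_eqWithin_of_eqWithin {k : ℕ} {X Y A : Set ℕ} (hX : eqWithin k X A)
    (hY : eqWithin k Y A) : (X \ Y).encard ≤ (2 * k : ℕ) := calc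
  (X \ Y).encard ≤ (X \ A ∪ A \ Y).encard :=
      Set.encard_le_encard fun x hx => by by_cases x ∈ A <;> simp_all
  _ ≤ k + k := (Set.encard_union_le _ _).trans
      (add_le_add (encard_diff_le_of_eqWithin hX).1 (encard_diff_le_of_eqWithin hY).2)
  _ = (2 * k : ℕ) := by push_cast; ring

lemma exists_computable_W_eq {α : Type*} [Primcodable α] {P : α → ℕ → ℕ → Prop}
    (hP : PrimrecRel fun (q : α × ℕ) n => P q.1 q.2 n) :
    ∃ idx : α → ℕ, Computable idx ∧ ∀ a, W (idx a) = {x | ∃ n, P a x n} := by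
  classical
  have hsearch : Partrec fun q : α × ℕ => Nat.rfind fun n => Part.some (decide (P q.1 q.2 n)) :=
    Partrec.rfind hP.decide.to_comp.partrec₂
  have hcode : Partrec fun m : ℕ => (decode (α := α) m.unpair.1 : Part α).bind
      fun a => Nat.rfind fun n => Part.some (decide (P a m.unpair.2 n)) :=
    Computable.decode.ofOption.comp (Computable.fst.comp Computable.unpair) |>.bind <|
      hsearch.comp <|
        Computable.snd.pair (Computable.snd.comp (Computable.unpair.comp Computable.fst))
  obtain ⟨c, hc⟩ := Code.exists_code.1 (Partrec.nat_iff.1 hcode)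
  refine ⟨fun a => encode (curry c (encode a)), ?_, fun a => ?_⟩
  · exact (Primrec.encode.comp (primrec₂_curry.comp (Primrec.const c) Primrec.encode)).to_comp
  · ext x
    simp only [W, Set.mem_ofPred_eq, ofNat_encode, eval_curry, hc, Nat.unpair_pair, encodek,
      Part.coe_some, Part.bind_some]
    refine ⟨fun h => ?_, fun ⟨n, hn⟩ =>
      Nat.rfind_dom.2 ⟨n, by simpa using hn, fun _ => trivial⟩⟩
    obtain ⟨n, hn, -⟩ := Nat.rfind_dom.1 h
    exact ⟨n, by simpa using hn⟩

end General

section Stages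

variable {b s s' x : ℕ}

lemma mem_Wstage : x ∈ Wstage b s ↔ ∃ y, y ∈ evaln s (ofNat Code b) x :=
  Option.isSome_iff_exists

lemma lt_of_mem_Wstage (h : x ∈ Wstage b s) : x < s :=
  let ⟨_, hy⟩ := mem_Wstage.1 h; evaln_bound hy

lemma Wstage_mono (h : s ≤ s') : Wstage b s ⊆ Wstage b s' := fun _ hx =>
  let ⟨y, hy⟩ := mem_Wstage.1 hx; mem_Wstage.2 ⟨y, evaln_mono h hy⟩

lemma iUnion_Wstage (b : ℕ) : ⋃ s, Wstage b s = W b := by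
  ext x
  simp only [Set.mem_iUnion, mem_Wstage, W, Set.mem_ofPred_eq, Part.dom_iff_mem, evaln_complete]
  exact exists_comm

lemma Wstage_subset_W : Wstage b s ⊆ W b :=
  fun _ hx => iUnion_Wstage b ▸ Set.mem_iUnion_of_mem s hx

lemma exists_Wstage_superset {F : Set ℕ} (hF : F.Finite) (h : F ⊆ W b) :
    ∃ s, F ⊆ Wstage b s := by
  rw [← hF.coe_toFinset] at h ⊢
  exact (Monotone.directed_le fun _ _ => Wstage_mono).exists_mem_subset_of_finset_subset_biUnion
    (iUnion_Wstage b ▸ h)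

def enumStage (b s : ℕ) : List ℕ :=
  (List.range s).filter fun x => (evaln s (ofNat Code b) x).isSome

lemma mem_enumStage : x ∈ enumStage b s ↔ x ∈ Wstage b s := by
  simp only [enumStage, List.mem_filter, List.mem_range]
  exact ⟨And.right, fun h => ⟨lt_of_mem_Wstage h, h⟩⟩

lemma nodup_enumStage : (enumStage b s).Nodup :=
  List.nodup_range.filter _

lemma enumStage_mono (h : s ≤ s') : enumStage b s ⊆ enumStage b s' := fun _ hx =>
  mem_enumStage.2 (Wstage_mono h (mem_enumStage.1 hx))

lemma primrec_enumStage : Primrec₂ enumStage := by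
  have : PrimrecRel fun (x : ℕ) (p : ℕ × ℕ) => (evaln p.2 (ofNat Code p.1) x).isSome := by
    refine Primrec.primrecPred (Primrec.eq.decide.comp ?_ (Primrec.const true))
    exact Primrec.option_isSome.comp (primrec_evaln.comp (((Primrec.snd.comp Primrec.snd).pair
      ((Primrec.ofNat Code).comp (Primrec.fst.comp Primrec.snd))).pair Primrec.fst))
  exact (this.listFilter.comp (Primrec.list_range.comp Primrec.snd) Primrec.id).of_eq
    fun p => by simp [enumStage]

end Stages

section Chains

variable (i a : ℕ)

/-- Stage `s` of the amalgam along the chain `π` on top of `W a`: a stage-`u` approximation of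
`W b`, for `b` the head of the chain, is admitted when it adds at most `2 i` elements to stage `s`
of the rest of the chain. -/
def chainStage : List ℕ → ℕ → List ℕ
  | [], s => enumStage a s
  | b :: π, s =>
    (List.range s).filter fun x => x ∈ chainStage π s ∨
      ∃ u < s + 1, x ∈ enumStage b u ∧
        ((enumStage b u).filter (· ∉ chainStage π s)).length ≤ 2 * i

open Primrec in
lemma primrec_chainStage :
    Primrec fun p : (ℕ × ℕ) × List ℕ => chainStage i p.1.1 p.2 p.1.2 := by
  -- the admission test, with parameters `(x, b, D)` and bounded variable `u`
  have hadm : PrimrecRel fun (u : ℕ) (q : ℕ × ℕ × List ℕ) =>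
      q.1 ∈ enumStage q.2.1 u ∧
        ((enumStage q.2.1 u).filter (· ∉ q.2.2)).length ≤ 2 * i := by
    have hE : Primrec fun r : ℕ × ℕ × ℕ × List ℕ => enumStage r.2.2.1 r.1 :=
      primrec_enumStage.comp (fst.comp (snd.comp snd)) fst
    refine (primrecRel_mem.comp (fst.comp snd) hE).and <|
      nat_le.comp (list_length.comp ?_) (const _)
    exact primrecRel_mem.not.listFilter.comp hE (snd.comp (snd.comp snd))
  have hstep : PrimrecRel fun (x : ℕ) (q : ℕ × List ℕ × ℕ) =>
      x ∈ q.2.1 ∨ ∃ u < q.2.2 + 1, x ∈ enumStage q.1 u ∧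
        ((enumStage q.1 u).filter (· ∉ q.2.1)).length ≤ 2 * i := by
    refine (primrecRel_mem.comp fst (fst.comp (snd.comp snd))).or ?_
    refine (hadm.exists_mem_list.comp (list_range.comp (succ.comp (snd.comp (snd.comp snd))))
      (fst.pair ((fst.comp snd).pair (fst.comp (snd.comp snd))))).of_eq fun _ => by simp
  have hrec := list_rec (snd : Primrec fun p : (ℕ × ℕ) × List ℕ => p.2)
    (primrec_enumStage.comp (fst.comp fst) (snd.comp fst))
    (hstep.listFilter.comp (list_range.comp (snd.comp (fst.comp fst)))
      ((fst.comp snd).pair ((snd.comp (snd.comp snd)).pair (snd.comp (fst.comp fst))))).to₂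
  refine hrec.of_eq fun ⟨⟨a, s⟩, π⟩ => ?_
  induction π with
  | nil => rfl
  | cons b π ih => simp [chainStage, ← ih]

variable {i a}

lemma lt_of_mem_chainStage {x s : ℕ} : ∀ {π : List ℕ}, x ∈ chainStage i a π s → x < s
  | [], h => lt_of_mem_Wstage (mem_enumStage.1 h)
  | _ :: _, h => List.mem_range.1 (List.mem_filter.1 h).1

lemma mem_chainStage_cons {b s x : ℕ} {π : List ℕ} :
    x ∈ chainStage i a (b :: π) s ↔ x ∈ chainStage i a π s ∨
      ∃ u ≤ s, x ∈ enumStage b u ∧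
        ((enumStage b u).filter (· ∉ chainStage i a π s)).length ≤ 2 * i := by
  simp only [chainStage, List.mem_filter, List.mem_range, decide_eq_true_eq, Nat.lt_succ_iff,
    and_iff_right_iff_imp]
  rintro (h | ⟨u, hu, hx, -⟩)
  · exact lt_of_mem_chainStage h
  · exact (lt_of_mem_Wstage (mem_enumStage.1 hx)).trans_le hu

lemma chainStage_cons_subset_cons {a' b s s' : ℕ} {ρ ρ' : List ℕ} (hs : s ≤ s')
    (h : chainStage i a ρ s ⊆ chainStage i a' ρ' s') :
    chainStage i a (b :: ρ) s ⊆ chainStage i a' (b :: ρ') s' := by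
  intro x hx
  rw [mem_chainStage_cons] at hx ⊢
  rcases hx with hx | ⟨u, hu, hxu, hc⟩
  · exact Or.inl (h hx)
  · exact Or.inr ⟨u, hu.trans hs, hxu, (length_filter_not_mem_anti h).trans hc⟩

lemma chainStage_mono {s s' : ℕ} (hs : s ≤ s') : ∀ π : List ℕ,
    chainStage i a π s ⊆ chainStage i a π s'
  | [] => enumStage_mono hs
  | _ :: π => chainStage_cons_subset_cons hs (chainStage_mono hs π)

lemma chainStage_subset_cons {b s : ℕ} {π : List ℕ} :
    chainStage i a π s ⊆ chainStage i a (b :: π) s :=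
  fun _ hx => mem_chainStage_cons.2 (Or.inl hx)

lemma enumStage_subset_chainStage {s : ℕ} :
    ∀ π : List ℕ, enumStage a s ⊆ chainStage i a π s
  | [] => List.Subset.refl _
  | _ :: π => List.Subset.trans (enumStage_subset_chainStage π) chainStage_subset_cons

lemma enumStage_subset_chainStage_cons {b u s : ℕ} {π : List ℕ} (hu : u ≤ s)
    (hc : ((enumStage b u).filter (· ∉ chainStage i a π s)).length ≤ 2 * i) :
    enumStage b u ⊆ chainStage i a (b :: π) s :=
  fun _ hx => mem_chainStage_cons.2 (Or.inr ⟨u, hu, hx, hc⟩)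

variable (i a) in
def chainSet (π : List ℕ) : Set ℕ := {x | ∃ s, x ∈ chainStage i a π s}

lemma chainSet_nil : chainSet i a [] = W a := by
  rw [← iUnion_Wstage]
  ext x
  simp [chainSet, chainStage, mem_enumStage]

lemma encard_chainSet_cons_diff_le (b : ℕ) (π : List ℕ) :
    (chainSet i a (b :: π) \ chainSet i a π).encard ≤ (2 * i : ℕ) := by
  refine encard_le_of_forall_finset fun F hF => ?_
  rcases F.eq_empty_or_nonempty with rfl | hne
  · simp
  have hcert : ∀ x ∈ F, ∃ u s, x ∈ enumStage b u ∧
      ((enumStage b u).filter (· ∉ chainStage i a π s)).length ≤ 2 * i := by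
    intro x hxF
    obtain ⟨⟨s, hx⟩, hxπ⟩ := hF hxF
    rcases mem_chainStage_cons.1 hx with hx | ⟨u, -, hxu, hc⟩
    · exact absurd ⟨s, hx⟩ hxπ
    · exact ⟨u, s, hxu, hc⟩
  choose! u s hmem hadm using hcert
  -- `F` lies in the admitted chunk of largest stage
  obtain ⟨x₀, hx₀, hmax⟩ := F.exists_max_image u hne
  calc F.card
      ≤ ((enumStage b (u x₀)).filter (· ∉ chainStage i a π (s x₀))).toFinset.card := by
        refine Finset.card_le_card fun x hx => ?_
        simp only [List.mem_toFinset, List.mem_filter, decide_eq_true_eq]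
        exact ⟨enumStage_mono (hmax x hx) (hmem x hx), fun h => (hF hx).2 ⟨_, h⟩⟩
    _ ≤ _ := (List.toFinset_card_le _).trans (hadm x₀ hx₀)

lemma encard_chainSet_diff_le {A : Set ℕ} {k : ℕ} (ha : (W a \ A).encard ≤ k) :
    ∀ π : List ℕ, (chainSet i a π \ A).encard ≤ (k + 2 * i * π.length : ℕ)
  | [] => by simpa [chainSet_nil] using ha
  | b :: π => calc
      (chainSet i a (b :: π) \ A).encard
        ≤ (chainSet i a π \ A ∪ (chainSet i a (b :: π) \ chainSet i a π)).encard :=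
          Set.encard_le_encard fun x hx => by by_cases h : x ∈ chainSet i a π <;> simp_all
      _ ≤ (k + 2 * i * π.length : ℕ) + (2 * i : ℕ) :=
          (Set.encard_union_le _ _).trans
            (add_le_add (encard_chainSet_diff_le ha π) (encard_chainSet_cons_diff_le b π))
      _ = (k + 2 * i * (b :: π).length : ℕ) := by push_cast [List.length_cons]; ring

lemma exists_enumStage_subset_chainStage_singleton {a' s : ℕ}
    (h : (W a \ W a').encard ≤ (2 * i : ℕ)) :
    ∃ s', enumStage a s ⊆ chainStage i a' [a] s' := by
  obtain ⟨s₀, hs₀⟩ := exists_Wstage_superset (b := a')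
    ((List.finite_toSet (enumStage a s)).inter_of_left (W a')) Set.inter_subset_right
  refine ⟨max s s₀, enumStage_subset_chainStage_cons (le_max_left _ _) ?_⟩
  refine Nat.cast_le.1 ((length_le_encard (nodup_enumStage.filter _) fun y hy => ?_).trans h)
  simp only [List.mem_filter, chainStage] at hy
  refine ⟨Wstage_subset_W (mem_enumStage.1 hy.1), fun hya' => of_decide_eq_true hy.2 ?_⟩
  exact mem_enumStage.2 (Wstage_mono (le_max_right _ _) (hs₀ ⟨hy.1, hya'⟩))

/-- `W a` is admitted as a chunk on top of `W a'`, so a chain anchored at `a` can be replayed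
from the anchor `a'` once `a` is appended to it. -/
lemma exists_chainStage_subset_reanchor {a' : ℕ} (h : (W a \ W a').encard ≤ (2 * i : ℕ)) :
    ∀ (π : List ℕ) (s : ℕ), ∃ s',
      chainStage i a π s ⊆ chainStage i a' (π.filter (fun b => b ≠ a ∧ b ≠ a') ++ [a]) s'
  | [], _ => exists_enumStage_subset_chainStage_singleton h
  | b :: ρ, s => by
    obtain ⟨s₁, hs₁⟩ := exists_chainStage_subset_reanchor h ρ s
    have hρ : chainStage i a ρ s ⊆
        chainStage i a' (ρ.filter (fun b => b ≠ a ∧ b ≠ a') ++ [a]) (max s₁ s) :=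
      List.Subset.trans hs₁ (chainStage_mono (le_max_left _ _) _)
    refine ⟨max s₁ s, ?_⟩
    by_cases hb : b = a ∨ b = a'
    · have hfil : (b :: ρ).filter (fun b => b ≠ a ∧ b ≠ a') =
          ρ.filter (fun b => b ≠ a ∧ b ≠ a') := by
        simpa [List.filter_cons] using hb.resolve_left
      rw [hfil]
      intro x hx
      rcases mem_chainStage_cons.1 hx with hx | ⟨u, hu, hxu, -⟩
      · exact hρ hx
      rcases hb with rfl | rfl
      · exact hρ (enumStage_subset_chainStage ρ (enumStage_mono hu hxu))
      · exact enumStage_subset_chainStage _ (enumStage_mono (hu.trans (le_max_right _ _)) hxu)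
    · have hfil : (b :: ρ).filter (fun b => b ≠ a ∧ b ≠ a') =
          b :: ρ.filter (fun b => b ≠ a ∧ b ≠ a') := by
        simp_all
      rw [hfil, List.cons_append]
      exact chainStage_cons_subset_cons (le_max_right _ _) hρ

end Chains

section Amalgam

variable {i a : ℕ} {T : List ℕ}

variable (i a T) in
/-- Chains have distinct members so that there are at most `2 ^ |T| * |T|!` of them. -/
def amalgam : Set ℕ := {x | ∃ π : List ℕ, π.Nodup ∧ π ⊆ T ∧ x ∈ chainSet i a π}

lemma W_subset_amalgam : W a ⊆ amalgam i a T :=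
  fun _ hx => ⟨[], List.nodup_nil, List.nil_subset _, chainSet_nil ▸ hx⟩

lemma amalgam_subset_amalgam {a' : ℕ} (haT : a ∈ T)
    (h : (W a \ W a').encard ≤ (2 * i : ℕ)) : amalgam i a T ⊆ amalgam i a' T := by
  rintro x ⟨π, hnd, hπT, s, hx⟩
  obtain ⟨s', hs'⟩ := exists_chainStage_subset_reanchor h π s
  refine ⟨_, ?_, ?_, s', hs' hx⟩
  · refine (hnd.filter _).append (List.nodup_singleton a) ?_
    simp +contextual
  · intro b hb
    rcases List.mem_append.1 hb with hb | hb
    · exact hπT (List.mem_of_mem_filter hb)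
    · exact List.mem_singleton.1 hb ▸ haT

def chains (T : List ℕ) : List (List ℕ) := T.sublists.flatMap List.permutations

lemma mem_chains {π : List ℕ} (hnd : π.Nodup) (hπT : π ⊆ T) : π ∈ chains T := by
  obtain ⟨l, hlπ, hlT⟩ := List.subperm_of_subset hnd hπT
  exact List.mem_flatMap.2 ⟨l, List.mem_sublists.2 hlT, List.mem_permutations.2 hlπ.symm⟩

lemma length_le_of_mem_chains {π : List ℕ} (h : π ∈ chains T) : π.length ≤ T.length := by
  obtain ⟨l, hl, hπ⟩ := List.mem_flatMap.1 h
  exact (List.mem_permutations.1 hπ).length_eq ▸ (List.mem_sublists.1 hl).length_le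

lemma length_chains_le : (chains T).length ≤ 2 ^ T.length * T.length.factorial := by
  rw [chains, List.length_flatMap, ← List.length_sublists]
  refine (List.sum_le_card_nsmul _ T.length.factorial fun n hn => ?_).trans_eq (by simp)
  obtain ⟨l, hl, rfl⟩ := List.mem_map.1 hn
  simpa [List.length_permutations] using Nat.factorial_le (List.mem_sublists.1 hl).length_le

lemma encard_amalgam_diff_le {A : Set ℕ} {k : ℕ} (ha : (W a \ A).encard ≤ k) :
    (amalgam i a T \ A).encard ≤
      (2 ^ T.length * T.length.factorial * (k + 2 * i * T.length) : ℕ) := by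
  classical
  have hsub : amalgam i a T \ A ⊆ ⋃ π ∈ (chains T).toFinset, chainSet i a π \ A := by
    rintro x ⟨⟨π, hnd, hπT, hx⟩, hxA⟩
    exact Set.mem_biUnion (List.mem_toFinset.2 (mem_chains hnd hπT)) ⟨hx, hxA⟩
  calc (amalgam i a T \ A).encard
      ≤ ∑ π ∈ (chains T).toFinset, (chainSet i a π \ A).encard :=
        (Set.encard_le_encard hsub).trans (Finset.set_encard_biUnion_le _ _)
    _ ≤ (chains T).toFinset.card • ((k + 2 * i * T.length : ℕ) : ℕ∞) := by
        refine Finset.sum_le_card_nsmul _ _ _ fun π hπ => (encard_chainSet_diff_le ha π).trans ?_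
        gcongr
        exact length_le_of_mem_chains (List.mem_toFinset.1 hπ)
    _ ≤ _ := by
        rw [nsmul_eq_mul, ← Nat.cast_mul, Nat.cast_le]
        gcongr
        exact (List.toFinset_card_le _).trans length_chains_le

lemma amalgam_eq_amalgam {a' : ℕ} {A : Set ℕ} (haT : a ∈ T) (ha'T : a' ∈ T)
    (ha : eqWithin i (W a) A) (ha' : eqWithin i (W a') A) : amalgam i a T = amalgam i a' T :=
  (amalgam_subset_amalgam haT (encard_diff_le_of_eqWithin_of_eqWithin ha ha')).antisymm
    (amalgam_subset_amalgam ha'T (encard_diff_le_of_eqWithin_of_eqWithin ha' ha))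

lemma eqWithin_amalgam {j : ℕ} {A : Set ℕ} (hT : T.length ≤ j) (ha : eqWithin i (W a) A) :
    eqWithin ((2 ^ j * j.factorial * (2 * j + 1) + 1) * i) (amalgam i a T) A := by
  obtain ⟨hWA, hAW⟩ := encard_diff_le_of_eqWithin ha
  have hbound : 2 ^ T.length * T.length.factorial * (i + 2 * i * T.length) + i ≤
      (2 ^ j * j.factorial * (2 * j + 1) + 1) * i := by
    have := Nat.mul_le_mul (Nat.mul_le_mul (Nat.pow_le_pow_right two_pos hT)
      (Nat.factorial_le hT)) (by omega : 2 * T.length + 1 ≤ 2 * j + 1)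
    calc _ = 2 ^ T.length * T.length.factorial * (2 * T.length + 1) * i + i := by ring
      _ ≤ 2 ^ j * j.factorial * (2 * j + 1) * i + i := by gcongr
      _ = _ := by ring
  rw [eqWithin_iff_encard_le, Set.symmDiff_def]
  calc (amalgam i a T \ A ∪ A \ amalgam i a T).encard
      ≤ (2 ^ T.length * T.length.factorial * (i + 2 * i * T.length) : ℕ) + i :=
        (Set.encard_union_le _ _).trans (add_le_add (encard_amalgam_diff_le hWA)
          ((Set.encard_le_encard (Set.sdiff_subset_sdiff_right W_subset_amalgam)).trans hAW))
    _ ≤ _ := by exact_mod_cast hbound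

lemma exists_computable_W_eq_amalgam (i : ℕ) :
    ∃ idx : ℕ × List ℕ → ℕ, Computable idx ∧
      ∀ a T, W (idx (a, T)) = amalgam i a T := by
  let chain (n : ℕ) : List ℕ × ℕ := ofNat (List ℕ × ℕ) n
  have hchain : Primrec fun q : ((ℕ × List ℕ) × ℕ) × ℕ => chain q.2 :=
    (Primrec.ofNat _).comp Primrec.snd
  obtain ⟨idx, hidx, hW⟩ := exists_computable_W_eq (α := ℕ × List ℕ)
    (P := fun p x n => (chain n).1.Nodup ∧ (chain n).1 ⊆ p.2 ∧
      x ∈ chainStage i p.1 (chain n).1 (chain n).2) <| by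
    refine primrecPred_nodup.comp (Primrec.fst.comp hchain) |>.and <|
      (primrecRel_subset.comp (Primrec.fst.comp hchain)
        (Primrec.snd.comp (Primrec.fst.comp Primrec.fst))).and <|
      primrecRel_mem.comp (Primrec.snd.comp Primrec.fst) ((primrec_chainStage i).comp
        (((Primrec.fst.comp (Primrec.fst.comp Primrec.fst)).pair (Primrec.snd.comp hchain)).pair
          (Primrec.fst.comp hchain)))
  refine ⟨idx, hidx, fun a T => (hW (a, T)).trans ?_⟩
  ext x
  constructor
  · rintro ⟨n, hnd, hsub, hx⟩
    exact ⟨_, hnd, hsub, _, hx⟩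
  · rintro ⟨π, hnd, hsub, s, hx⟩
    exact ⟨encode (π, s), by simpa [chain] using ⟨hnd, hsub, hx⟩⟩

end Amalgam

section Leaders

/-- More occurrences in `l` rank higher; ties go to the earlier first occurrence. -/
def rankKey (l : List ℕ) (b : ℕ) : ℕ ×ₗ ℕᵒᵈ :=
  toLex (l.count b, OrderDual.toDual (l.idxOf b))

def IsLeader (j : ℕ) (l : List ℕ) (b : ℕ) : Prop :=
  b ∈ l ∧ ((List.range (l.foldr max 0 + 1)).filter (rankKey l b < rankKey l ·)).length < j

instance (j : ℕ) (l : List ℕ) : DecidablePred (IsLeader j l) :=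
  fun _ => inferInstanceAs (Decidable (_ ∧ _))

def leaders (j : ℕ) (l : List ℕ) : List ℕ :=
  (List.range (l.foldr max 0 + 1)).filter (IsLeader j l ·)

variable {j : ℕ} {l : List ℕ} {b b' : ℕ}

lemma mem_leaders : b ∈ leaders j l ↔ IsLeader j l b := by
  simp only [leaders, List.mem_filter, List.mem_range, decide_eq_true_eq, and_iff_right_iff_imp]
  exact fun h => Nat.lt_succ_of_le (le_foldr_max h.1)

lemma eq_of_rankKey_eq (hb : b ∈ l) (h : rankKey l b = rankKey l b') : b = b' :=
  (List.idxOf_inj hb).1 (congrArg (fun k => OrderDual.ofDual (ofLex k).2) h)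

lemma length_leaders_le : (leaders j l).length ≤ j := by
  classical
  by_contra! hlen
  have hnd : (leaders j l).Nodup := List.nodup_range.filter _
  set F := (leaders j l).toFinset
  have hF : F.Nonempty := by
    rw [← Finset.card_pos, List.toFinset_card_of_nodup hnd]; omega
  obtain ⟨b₀, hb₀, hmin⟩ := F.exists_min_image (rankKey l) hF
  have hb₀' := mem_leaders.1 (List.mem_toFinset.1 hb₀)
  -- the lowest ranked leader is outranked by all the other leaders
  have hsub : F.erase b₀ ⊆
      ((List.range (l.foldr max 0 + 1)).filter (rankKey l b₀ < rankKey l ·)).toFinset := by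
    intro b hb
    obtain ⟨hne, hbF⟩ := Finset.mem_erase.1 hb
    have hb' := List.mem_toFinset.1 hbF
    simp only [List.mem_toFinset, List.mem_filter, decide_eq_true_eq]
    refine ⟨(List.mem_filter.1 hb').1, (hmin b hbF).lt_of_ne fun h => hne ?_⟩
    exact (eq_of_rankKey_eq hb₀'.1 h).symm
  have hcard := (Finset.card_le_card hsub).trans (List.toFinset_card_le _)
  rw [Finset.card_erase_of_mem hb₀, List.toFinset_card_of_nodup hnd] at hcard
  have := hb₀'.2
  omega

lemma not_rankKey_lt_of_not_mem (hb : b ∈ l) (hb' : b' ∉ l) : ¬rankKey l b < rankKey l b' := by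
  refine not_lt.2 (le_of_lt (Prod.Lex.toLex_lt_toLex.2 (Or.inl ?_)))
  simpa [List.count_eq_zero_of_not_mem hb'] using List.count_pos_iff.2 hb

open Primrec in
lemma primrecRel_rankKey_lt :
    PrimrecRel fun (b' : ℕ) (p : List ℕ × ℕ) => rankKey p.1 p.2 < rankKey p.1 b' := by
  have hcount := fun {g : ℕ × List ℕ × ℕ → ℕ} (hg : Primrec g) =>
    primrec_count.comp (fst.comp snd) hg
  have hidx := fun {g : ℕ × List ℕ × ℕ → ℕ} (hg : Primrec g) =>
    list_idxOf.comp hg (fst.comp snd)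
  have hb := snd.comp (snd (α := ℕ) (β := List ℕ × ℕ))
  refine ((nat_lt.comp (hcount hb) (hcount fst)).or ((Primrec.eq.comp (hcount hb)
    (hcount fst)).and (nat_lt.comp (hidx fst) (hidx hb)))).of_eq fun _ => ?_
  simp [rankKey, Prod.Lex.toLex_lt_toLex]

open Primrec in
lemma primrec_leaders (j : ℕ) : Primrec (leaders j) := by
  have hrange : Primrec fun l : List ℕ => List.range (l.foldr max 0 + 1) :=
    list_range.comp <| succ.comp <|
      list_foldr Primrec.id (const 0) (nat_max.comp (fst.comp snd) (snd.comp snd)).to₂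
  have hleader : PrimrecRel fun (b : ℕ) (l : List ℕ) => IsLeader j l b :=
    primrecRel_mem.and <| nat_lt.comp (list_length.comp <|
      primrecRel_rankKey_lt.listFilter.comp (hrange.comp snd) (snd.pair fst)) (const j)
  exact hleader.listFilter.comp hrange Primrec.id

end Leaders

section Stabilization

variable {O : ℕ → ℕ} {S : Finset ℕ} {j b b' m : ℕ}

variable (O) in
def frequentValues : Set ℕ := {b | ∃ᶠ n in atTop, O n = b}

lemma frequentValues_subset (hev : ∀ᶠ n in atTop, O n ∈ S) : frequentValues O ⊆ S :=
  fun _ hb => let ⟨_, hn, hnS⟩ := (hb.and_eventually hev).exists; hn ▸ hnS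

lemma eventually_mem_frequentValues (hev : ∀ᶠ n in atTop, O n ∈ S) :
    ∀ᶠ n in atTop, O n ∈ frequentValues O := by
  have : ∀ᶠ n in atTop, ∀ b ∈ S, b ∉ frequentValues O → O n ≠ b :=
    S.eventually_all.2 fun b _ => by
      by_cases hb : b ∈ frequentValues O
      · exact .of_forall fun _ h => absurd hb h
      · exact (not_frequently.1 hb).mono fun _ h _ => h
  filter_upwards [hev, this] with n hnS hn
  by_contra h
  exact hn _ hnS h rfl

lemma bddAbove_range_of_eventually_mem (hev : ∀ᶠ n in atTop, O n ∈ S) :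
    BddAbove (Set.range O) := by
  obtain ⟨N, hN⟩ := eventually_atTop.1 hev
  refine ((S.finite_toSet.union ((Set.finite_Iio N).image O)).subset ?_).bddAbove
  rintro _ ⟨n, rfl⟩
  rcases lt_or_ge n N with h | h
  · exact Or.inr ⟨n, h, rfl⟩
  · exact Or.inl (hN n h)

lemma seg_succ (n : ℕ) : seg O (n + 1) = seg O n ++ [O n] := by
  simp [seg, List.range_succ]

lemma mem_seg {n : ℕ} : b ∈ seg O n ↔ ∃ m < n, O m = b := by
  simp [seg]

lemma seg_prefix {n n' : ℕ} (h : n ≤ n') : seg O n <+: seg O n' := by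
  rw [seg, seg, ← Nat.add_sub_cancel' h, List.range_add, List.map_append]
  exact List.prefix_append _ _

lemma tendsto_count_seg (hb : b ∈ frequentValues O) :
    Tendsto (fun n => (seg O n).count b) atTop atTop := by
  refine tendsto_atTop_atTop_of_monotone (fun n n' h => (seg_prefix h).sublist.count_le b) ?_
  intro K
  induction K with
  | zero => exact ⟨0, Nat.zero_le _⟩
  | succ K ih =>
    obtain ⟨N, hN⟩ := ih
    obtain ⟨m, hNm, hm⟩ := (frequently_atTop.1 hb) N
    refine ⟨m + 1, ?_⟩
    rw [seg_succ, List.count_append, List.count_singleton, if_pos (by simp [hm])]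
    exact Nat.succ_le_succ (hN.trans ((seg_prefix hNm).sublist.count_le b))

lemma eventuallyConst_count_seg (hb : b ∉ frequentValues O) :
    EventuallyConst (fun n => (seg O n).count b) atTop := by
  obtain ⟨N, hN⟩ := eventually_atTop.1 (not_frequently.1 hb)
  refine eventuallyConst_atTop_nat.2 ⟨N, fun n hn => ?_⟩
  simp [seg_succ, hN n hn]

lemma eventuallyConst_idxOf_seg (hm : O m = b) :
    EventuallyConst (fun n => (seg O n).idxOf b) atTop := by
  refine eventuallyConst_atTop_nat.2 ⟨m + 1, fun n hn => ?_⟩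
  rw [seg_succ, List.idxOf_append_of_mem (mem_seg.2 ⟨m, hn, hm⟩)]

lemma eventually_mem_seg (hm : O m = b) : ∀ᶠ n in atTop, b ∈ seg O n :=
  eventually_atTop.2 ⟨m + 1, fun _ hn => mem_seg.2 ⟨m, hn, hm⟩⟩

lemma eventuallyConst_rankKey_seg (hb : b ∉ frequentValues O) (hm : O m = b) :
    EventuallyConst (fun n => rankKey (seg O n) b) atTop :=
  (eventuallyConst_count_seg hb).comp₂ (fun c k => toLex (c, OrderDual.toDual k))
    (eventuallyConst_idxOf_seg hm)

lemma eventually_rankKey_lt (hb : b ∉ frequentValues O) (hb' : b' ∈ frequentValues O) :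
    ∀ᶠ n in atTop, rankKey (seg O n) b < rankKey (seg O n) b' := by
  obtain ⟨c, hc⟩ := eventuallyConst_iff_exists_eventuallyEq.1 (eventuallyConst_count_seg hb)
  filter_upwards [hc, (tendsto_count_seg hb').eventually_gt_atTop c] with n hn hn'
  exact Prod.Lex.toLex_lt_toLex.2 (Or.inl (hn ▸ hn'))

lemma foldr_max_seg_le {B n : ℕ} (hB : B ∈ upperBounds (Set.range O)) :
    (seg O n).foldr max 0 ≤ B :=
  foldr_max_le fun _ hx => let ⟨m, _, hm⟩ := mem_seg.1 hx; hm ▸ hB ⟨m, rfl⟩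

lemma eventuallyConst_max_seg (hev : ∀ᶠ n in atTop, O n ∈ S) :
    EventuallyConst (fun n => (seg O n).foldr max 0) atTop := by
  obtain ⟨B, hB⟩ := bddAbove_range_of_eventually_mem hev
  refine eventuallyConst_of_monotone_of_bddAbove
    (fun n n' h => foldr_max_le fun x hx => le_foldr_max ((seg_prefix h).subset hx)) ⟨B, ?_⟩
  rintro _ ⟨n, rfl⟩
  exact foldr_max_seg_le hB

/-- Eventually the values taken infinitely often outrank all others, and there are at most
`card S ≤ j` of them. -/
lemma eventually_isLeader (hev : ∀ᶠ n in atTop, O n ∈ S) (hS : S.card ≤ j)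
    (hb : b ∈ frequentValues O) : ∀ᶠ n in atTop, IsLeader j (seg O n) b := by
  classical
  obtain ⟨B, hB⟩ := bddAbove_range_of_eventually_mem hev
  set F := S.filter (· ∈ frequentValues O)
  have hbF : b ∈ F := Finset.mem_filter.2 ⟨frequentValues_subset hev hb, hb⟩
  have hbeat : ∀ᶠ n in atTop, ∀ b' ∈ Finset.range (B + 1),
      rankKey (seg O n) b < rankKey (seg O n) b' → b' ∈ F.erase b :=
    (Finset.range (B + 1)).eventually_all.2 fun b' _ => by
      by_cases hb' : b' ∈ frequentValues O
      · refine .of_forall fun n h => Finset.mem_erase.2 ⟨?_, ?_⟩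
        · rintro rfl
          exact lt_irrefl _ h
        · exact Finset.mem_filter.2 ⟨frequentValues_subset hev hb', hb'⟩
      · exact (eventually_rankKey_lt hb' hb).mono fun n h h' => absurd (h.trans h') (lt_irrefl _)
  obtain ⟨m, hm⟩ := hb.exists
  filter_upwards [eventually_mem_seg hm, hbeat] with n hbn hn
  refine ⟨hbn, ?_⟩
  have hsub : ((List.range ((seg O n).foldr max 0 + 1)).filter
      (rankKey (seg O n) b < rankKey (seg O n) ·)).toFinset ⊆ F.erase b := by
    intro b' hb'
    simp only [List.mem_toFinset, List.mem_filter, List.mem_range, decide_eq_true_eq] at hb'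
    exact hn b' (Finset.mem_range.2 (hb'.1.trans_le (Nat.succ_le_succ (foldr_max_seg_le hB))))
      hb'.2
  have h₁ := Finset.card_le_card hsub
  rw [List.toFinset_card_of_nodup (List.nodup_range.filter _), Finset.card_erase_of_mem hbF] at h₁
  have h₂ : F.card ≤ S.card := Finset.card_filter_le _ _
  have h₃ := Finset.card_pos.2 ⟨b, hbF⟩
  omega

lemma eventuallyConst_isLeader (hev : ∀ᶠ n in atTop, O n ∈ S) (hS : S.card ≤ j) (b : ℕ) :
    EventuallyConst (fun n => IsLeader j (seg O n) b) atTop := by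
  by_cases hb : b ∈ frequentValues O
  · exact eventuallyConst_pred.2 (Or.inl (eventually_isLeader hev hS hb))
  by_cases hocc : ∃ m, O m = b
  swap
  · simp only [not_exists] at hocc
    refine eventuallyConst_pred.2 (Or.inr (.of_forall fun n h => ?_))
    obtain ⟨m, _, hm⟩ := mem_seg.1 h.1
    exact hocc m hm
  obtain ⟨m, hm⟩ := hocc
  have hbeat : ∀ b',
      EventuallyConst (fun n => rankKey (seg O n) b < rankKey (seg O n) b') atTop := by
    intro b'
    by_cases hb' : b' ∈ frequentValues O
    · exact eventuallyConst_pred.2 (Or.inl (eventually_rankKey_lt hb hb'))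
    by_cases hocc' : ∃ m', O m' = b'
    · obtain ⟨m', hm'⟩ := hocc'
      exact (eventuallyConst_rankKey_seg hb hm).comp₂ (· < ·)
        (eventuallyConst_rankKey_seg hb' hm')
    · simp only [not_exists] at hocc'
      refine eventuallyConst_pred.2 (Or.inr ((eventually_mem_seg hm).mono fun n hn =>
        not_rankKey_lt_of_not_mem hn fun h => ?_))
      obtain ⟨m', _, hm'⟩ := mem_seg.1 h
      exact hocc' m' hm'
  exact (eventuallyConst_pred.2 (Or.inl (eventually_mem_seg hm))).comp₂ And
    ((eventuallyConst_filter_range ((eventuallyConst_max_seg hev).comp (· + 1)) hbeat).comp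
      (·.length < j))

lemma exists_eventually_leaders_eq (hev : ∀ᶠ n in atTop, O n ∈ S) (hS : S.card ≤ j) :
    ∃ T, (∀ᶠ n in atTop, leaders j (seg O n) = T) ∧
      ∀ b ∈ frequentValues O, b ∈ T := by
  obtain ⟨T, hT⟩ := eventuallyConst_iff_exists_eventuallyEq.1
    (eventuallyConst_filter_range ((eventuallyConst_max_seg hev).comp (· + 1))
      (eventuallyConst_isLeader hev hS))
  refine ⟨T, hT, fun b hb => ?_⟩
  obtain ⟨n, hn, hbn⟩ := (hT.and (eventually_isLeader hev hS hb)).exists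
  exact (show leaders j (seg O n) = T from hn) ▸ mem_leaders.2 hbn

end Stabilization

section Learner

def outputs (M : List ℕ → ℕ) (σ : List ℕ) : List ℕ :=
  (List.range σ.length).map fun m => M (σ.take m)

lemma outputs_seg (M : List ℕ → ℕ) (f : ℕ → ℕ) (n : ℕ) :
    outputs M (seg f n) = seg (fun m => M (seg f m)) n := by
  simp only [outputs, seg, List.length_map, List.length_range]
  refine List.map_congr_left fun m hm => ?_
  rw [← List.map_take, List.take_range, min_eq_left (List.mem_range.1 hm).le]

lemma computable_outputs {M : List ℕ → ℕ} (hM : Computable M) : Computable (outputs M) := by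
  have hstep : Computable₂ fun (σ : List ℕ) (p : ℕ × List ℕ) =>
      p.2 ++ [M (σ.take p.1)] :=
    Computable.list_concat.comp (Computable.snd.comp Computable.snd)
      (hM.comp (Primrec.list_take.to_comp.comp (Computable.fst.comp Computable.snd) Computable.fst))
  refine (Computable.nat_rec Computable.list_length (Computable.const []) hstep).of_eq fun σ => ?_
  simp only [outputs]
  induction σ.length with
  | zero => rfl
  | succ k ih => simp [ih, List.range_succ]

def amalgamLearner (j : ℕ) (M : List ℕ → ℕ) (idx : ℕ × List ℕ → ℕ) : List ℕ → ℕ :=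
  fun σ => idx (M σ, leaders j (outputs M σ))

lemma fextIdentifies_amalgamLearner {i j : ℕ} {M : List ℕ → ℕ} {idx : ℕ × List ℕ → ℕ}
    (hidx : ∀ a T, W (idx (a, T)) = amalgam i a T) {f : ℕ → ℕ}
    (hf : FexIdentifies (some i) (some j) M f) :
    FextIdentifies (some ((2 ^ j * j.factorial * (2 * j + 1) + 1) * i)) (some j)
      (amalgamLearner j M idx) f := by
  classical
  obtain ⟨S, hScard, hSev, hSacc⟩ := hf
  obtain ⟨T, hT, hFT⟩ := exists_eventually_leaders_eq hSev hScard
  have hTj : T.length ≤ j := let ⟨_, hn⟩ := hT.exists; hn ▸ length_leaders_le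
  set F := frequentValues fun m => M (seg f m)
  have hacc : ∀ a ∈ F, eqWithin i (W a) (Set.range f) := fun a ha =>
    hSacc a (frequentValues_subset hSev ha)
  refine ⟨(S.filter (· ∈ F)).image fun a => idx (a, T), ?_, ?_, ?_, ?_⟩
  · exact Finset.card_image_le.trans ((Finset.card_filter_le _ _).trans hScard)
  · filter_upwards [hT, hSev, eventually_mem_frequentValues hSev] with n hn hnS hnF
    rw [amalgamLearner, outputs_seg, hn]
    exact Finset.mem_image_of_mem _ (Finset.mem_filter.2 ⟨hnS, hnF⟩)
  · simp only [Finset.mem_image, Finset.mem_filter]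
    rintro _ ⟨a, ⟨-, ha⟩, rfl⟩
    rw [hidx]
    exact eqWithin_amalgam hTj (hacc a ha)
  · simp only [Finset.mem_image, Finset.mem_filter]
    rintro _ ⟨a, ⟨-, ha⟩, rfl⟩ _ ⟨a', ⟨-, ha'⟩, rfl⟩
    rw [hidx, hidx]
    exact amalgam_eq_amalgam (hFT a ha) (hFT a' ha') (hacc a ha) (hacc a' ha')

lemma computable_amalgamLearner {j : ℕ} {M : List ℕ → ℕ} {idx : ℕ × List ℕ → ℕ}
    (hM : Computable M) (hidx : Computable idx) : Computable (amalgamLearner j M idx) :=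
  hidx.comp (hM.pair ((primrec_leaders j).to_comp.comp (computable_outputs hM)))

end Learner

end TxtFex

open TxtFex

/-- For every `j ∈ ℕ` there is `c ∈ ℕ`, depending only on `j`, such that
for every `i ∈ ℕ`, TxtFex^i_j ⊆ TxtFext^{c·i}_j. -/
theorem txtFex_subset_txtFext_mul (j : ℕ) :
    ∃ c : ℕ, ∀ i : ℕ, ∀ 𝓕 : Set (Set ℕ), NiceFamily 𝓕 →
      FexLearnable (some i) (some j) 𝓕 → FextLearnable (some (c * i)) (some j) 𝓕 := by
  refine ⟨2 ^ j * j.factorial * (2 * j + 1) + 1, fun i 𝓕 _ ⟨M, hM, hlearn⟩ => ?_⟩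
  obtain ⟨idx, hidx, hW⟩ := exists_computable_W_eq_amalgam i
  exact ⟨amalgamLearner j M idx, computable_amalgamLearner hM hidx,
    fun A hA f hf => fextIdentifies_amalgamLearner hW (hlearn A hA f hf)⟩
end

section
/- For every i ∈ ℕ, TxtFex^i_* is strictly contained in TxtFex*_*: there exists a family of nonempty c.e. subsets of ℕ that is TxtFex*₂-learnable (hence TxtFex*_*-learnable) but not TxtFex^i_*-learnable for any i ∈ ℕ. -/
open Filter

/-!
Take the family of all sets `ℕ \ [a, b)`. Each is a finite variant of `ℕ`, so the learner that
always conjectures an index of `ℕ` learns it with `=*` accuracy. Against accuracy `=^i`: a learner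
of `ℕ` has a finite sequence `σ` after which every conjecture is `=^i ℕ`; a text for
`ℕ \ [m, m + 2i + 1)`, with `m` above the content of `σ`, begins with `σ`, so the learner's final
conjectures on it would be `=^i` to both sets, which differ in `2i + 1` points.
-/

theorem REPred.exists_W_eq {p : ℕ → Prop} (hp : REPred p) : ∃ c, W c = {x | p x} := by
  obtain ⟨c, hc⟩ := Nat.Partrec.Code.exists_code.1
    (Partrec.nat_iff.1 (hp.map ((Computable.const 0).comp Computable.fst).to₂))
  exact ⟨Encodable.encode c, by ext x; simp [W, hc, Part.assert]⟩

theorem exists_W_eq_compl_Ico (a b : ℕ) : ∃ c, W c = (Set.Ico a b)ᶜ :=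
  have hp : PrimrecPred fun x : ℕ => x ∉ Set.Ico a b :=
    ((Primrec.nat_le.comp (.const a) .id).and (Primrec.nat_lt.comp .id (.const b))).not
  hp.computablePred.to_re.exists_W_eq

theorem eqWithin.symm {i : ℕ} {A B : Set ℕ} (h : eqWithin i A B) : eqWithin i B A := by
  rwa [eqWithin, symmDiff_comm]

theorem eqWithin.trans {i j : ℕ} {A B C : Set ℕ} (hAB : eqWithin i A B) (hBC : eqWithin j B C) :
    eqWithin (i + j) A C := by
  have hsub : symmDiff A C ⊆ symmDiff A B ∪ symmDiff B C := symmDiff_triangle A B C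
  have hfin := hAB.1.union hBC.1
  refine ⟨hfin.subset hsub, ?_⟩
  calc (symmDiff A C).ncard ≤ (symmDiff A B ∪ symmDiff B C).ncard := Set.ncard_le_ncard hsub hfin
    _ ≤ (symmDiff A B).ncard + (symmDiff B C).ncard := Set.ncard_union_le _ _
    _ ≤ i + j := add_le_add hAB.2 hBC.2

theorem univ_symmDiff_compl {α : Type*} (C : Set α) : symmDiff Set.univ Cᶜ = C := by
  rw [← Set.top_eq_univ, top_symmDiff, hnot_eq_compl, compl_compl]

theorem content_append (σ τ : List ℕ) : content (σ ++ τ) = content σ ∪ content τ := by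
  ext x; simp [content]

theorem length_seg (f : ℕ → ℕ) (n : ℕ) : (seg f n).length = n := by
  simp [seg]

theorem seg_isPrefix_seg (f : ℕ → ℕ) {m n : ℕ} (h : m ≤ n) : seg f m <+: seg f n := by
  have : seg f m = (seg f n).take m := by
    simp only [seg, ← List.map_take, List.take_range, min_eq_left h]
  exact this ▸ List.take_prefix m _

section LimitText

-- Under `hlen` below, `σ (n + 1)` has length `> n`, so the default `0` is never read.
def limitText (σ : ℕ → List ℕ) (n : ℕ) : ℕ := (σ (n + 1)).getD n 0

variable {σ : ℕ → List ℕ} (hstep : ∀ k, σ k <+: σ (k + 1)) (hlen : ∀ k, k ≤ (σ k).length)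
include hstep hlen

theorem limitText_eq_getElem {k n : ℕ} (hn : n < (σ k).length) : limitText σ n = (σ k)[n] := by
  have hmono := Nat.rel_of_forall_rel_succ_of_le (· <+: ·) hstep
  have hn' : n < (σ (n + 1)).length := Nat.lt_of_lt_of_le n.lt_succ_self (hlen _)
  rw [limitText, List.getD_eq_getElem _ _ hn']
  rcases le_total k (n + 1) with h | h
  · exact ((hmono h).getElem hn).symm
  · exact (hmono h).getElem hn'

theorem seg_limitText_of_isPrefix {k : ℕ} {l : List ℕ} (hl : l <+: σ k) :
    seg (limitText σ) l.length = l := by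
  refine List.ext_getElem (length_seg _ _) fun n _ hn => ?_
  simp only [seg, List.getElem_map, List.getElem_range]
  rw [limitText_eq_getElem hstep hlen (Nat.lt_of_lt_of_le hn hl.length_le), hl.getElem hn]

theorem range_limitText : Set.range (limitText σ) = ⋃ k, content (σ k) := by
  ext x
  simp only [Set.mem_range, Set.mem_iUnion, content, Set.mem_ofPred_eq]
  constructor
  · rintro ⟨n, rfl⟩
    have hn : n < (σ (n + 1)).length := Nat.lt_of_lt_of_le n.lt_succ_self (hlen _)
    exact ⟨n + 1, limitText_eq_getElem hstep hlen hn ▸ List.getElem_mem hn⟩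
  · rintro ⟨k, hx⟩
    obtain ⟨n, hn, rfl⟩ := List.getElem_of_mem hx
    exact ⟨n, limitText_eq_getElem hstep hlen hn⟩

end LimitText

theorem exists_text_of_content_subset {A : Set ℕ} (hA : A.Nonempty) {τ : List ℕ}
    (hτ : content τ ⊆ A) : ∃ f : ℕ → ℕ, Set.range f = A ∧ seg f τ.length = τ := by
  obtain ⟨f₀, rfl⟩ := A.to_countable.exists_eq_range hA
  let σ : ℕ → List ℕ := fun k => τ ++ (List.range k).map f₀
  have hstep : ∀ k, σ k <+: σ (k + 1) := fun k => by
    simp only [σ, List.range_succ, List.map_append, ← List.append_assoc]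
    exact List.prefix_append _ _
  have hlen : ∀ k, k ≤ (σ k).length := fun k => by simp [σ]
  refine ⟨limitText σ, ?_, seg_limitText_of_isPrefix hstep hlen (k := 0) (List.prefix_append τ _)⟩
  rw [range_limitText hstep hlen]
  refine subset_antisymm (Set.iUnion_subset fun k => ?_) fun x ⟨n, hx⟩ => ?_
  · simp only [σ, content_append]
    refine Set.union_subset hτ fun x hx => ?_
    simp only [content, Set.mem_ofPred_eq, List.mem_map, List.mem_range] at hx
    obtain ⟨n, -, rfl⟩ := hx
    exact ⟨n, rfl⟩
  · exact Set.mem_iUnion.2 ⟨n + 1, by simp [σ, content, ← hx, List.range_succ]⟩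

theorem FexLearnsSet.exists_locking_seq {i j : Option ℕ} {M : List ℕ → ℕ} {A : Set ℕ}
    (hA : A.Nonempty) (hM : FexLearnsSet i j M A) :
    ∃ σ, content σ ⊆ A ∧ ∀ τ, content τ ⊆ A → Accurate i (W (M (σ ++ τ))) A := by
  by_contra! hlock
  have hbad : ∀ σ, ∃ τ, content σ ⊆ A → content τ ⊆ A ∧ ¬ Accurate i (W (M (σ ++ τ))) A :=
    fun σ => (em (content σ ⊆ A)).elim (fun hσ => (hlock σ hσ).imp fun _ h _ => h)
      fun hσ => ⟨[], fun h => absurd h hσ⟩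
  choose T hT using hbad
  obtain ⟨f₀, rfl⟩ := A.to_countable.exists_eq_range hA
  -- Alternately spoil the conjecture and enumerate `A`.
  let σ : ℕ → List ℕ := fun k => Nat.rec [] (fun k s => s ++ T s ++ [f₀ k]) k
  have hσA : ∀ k, content (σ k) ⊆ Set.range f₀ := by
    intro k
    induction k with
    | zero => simp [σ, content]
    | succ k ih =>
      simp only [σ, content_append] at ih ⊢
      exact Set.union_subset (Set.union_subset ih (hT _ ih).1) (by simp [content])
  have hstep : ∀ k, σ k <+: σ (k + 1) := fun _ =>
    List.prefix_append_of_prefix (List.prefix_append _ _)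
  have hlen : ∀ k, k ≤ (σ k).length := by
    intro k
    induction k with
    | zero => simp
    | succ k ih => simp only [σ, List.length_append, List.length_singleton] at ih ⊢; omega
  have hrange : Set.range (limitText σ) = Set.range f₀ := by
    rw [range_limitText hstep hlen]
    refine subset_antisymm (Set.iUnion_subset hσA) fun x ⟨k, hx⟩ => ?_
    exact Set.mem_iUnion.2 ⟨k + 1, by simp [σ, content, hx]⟩
  obtain ⟨S, -, hev, hacc⟩ := hM _ hrange
  obtain ⟨N, hN⟩ := eventually_atTop.1 hev
  have hpref : σ N ++ T (σ N) <+: σ (N + 1) := List.prefix_append _ _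
  have hconj := hN (σ N ++ T (σ N)).length
    ((hlen N).trans ((List.prefix_append _ _).length_le))
  rw [seg_limitText_of_isPrefix hstep hlen (k := N + 1) hpref] at hconj
  exact (hT _ (hσA N)).2 (hrange ▸ hacc _ hconj)

def icoComplements : Set (Set ℕ) := {A | ∃ a b : ℕ, A = (Set.Ico a b)ᶜ}

theorem niceFamily_icoComplements : NiceFamily icoComplements := by
  rintro _ ⟨a, b, rfl⟩
  obtain ⟨c, hc⟩ := exists_W_eq_compl_Ico a b
  exact ⟨⟨b, by simp⟩, c, hc.symm⟩

theorem fexLearnsFamily_const {i j : Option ℕ} {e : ℕ} {𝓕 : Set (Set ℕ)} (hj : CardOK j {e})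
    (he : ∀ A ∈ 𝓕, Accurate i (W e) A) : FexLearnsFamily i j (fun _ => e) 𝓕 :=
  fun A hA _ hf => ⟨{e}, hj, .of_forall fun _ => Finset.mem_singleton_self e,
    fun _ ha => Finset.mem_singleton.1 ha ▸ hf ▸ he A hA⟩

theorem fexLearnable_icoComplements {j : Option ℕ} (hj : j ≠ some 0) :
    FexLearnable none j icoComplements := by
  obtain ⟨e, he⟩ := exists_W_eq_compl_Ico 0 0
  refine ⟨fun _ => e, Computable.const e, fexLearnsFamily_const ?_ ?_⟩
  · cases j with
    | none => trivial
    | some k =>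
      show ({e} : Finset ℕ).card ≤ k
      simpa [Nat.one_le_iff_ne_zero] using hj
  · rintro _ ⟨a, b, rfl⟩
    show (symmDiff (W e) _).Finite
    rw [he, Set.Ico_self, Set.compl_empty, univ_symmDiff_compl]
    exact Set.finite_Ico a b

theorem not_fexLearnsFamily_icoComplements {i : ℕ} {j : Option ℕ} {M : List ℕ → ℕ} :
    ¬ FexLearnsFamily (some i) j M icoComplements := by
  intro hM
  obtain ⟨σ, -, hσ⟩ :=
    (hM Set.univ ⟨0, 0, by simp⟩).exists_locking_seq Set.univ_nonempty
  set m := σ.sum + 1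
  set B : Set ℕ := (Set.Ico m (m + (2 * i + 1)))ᶜ
  have hσB : content σ ⊆ B := fun x hx => by
    have hx_le : x ≤ σ.sum := List.le_sum_of_mem hx
    simp only [B, Set.mem_compl_iff, Set.mem_Ico]
    omega
  obtain ⟨f, hf, hfσ⟩ := exists_text_of_content_subset ⟨m + (2 * i + 1), by simp [B]⟩ hσB
  obtain ⟨S, -, hev, hacc⟩ := hM B ⟨_, _, rfl⟩ f hf
  obtain ⟨n, hnS, hnσ⟩ := (hev.and (eventually_ge_atTop σ.length)).exists
  obtain ⟨τ, hτ⟩ := hfσ ▸ seg_isPrefix_seg f hnσ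
  have hB : eqWithin i (W (M (seg f n))) B := hf ▸ hacc _ hnS
  have huniv : eqWithin i (W (M (seg f n))) Set.univ := hτ ▸ hσ τ (Set.subset_univ _)
  have hcard := (huniv.symm.trans hB).2
  rw [univ_symmDiff_compl, ← Finset.coe_Ico, Set.ncard_coe_finset, Nat.card_Ico] at hcard
  omega

/-- There is a family of nonempty c.e. sets that is TxtFex*₂-learnable
(hence TxtFex*_*-learnable) but not TxtFex^i_*-learnable for any `i ∈ ℕ`. -/
theorem txtFexIStar_ssubset_txtFexStarStar :
    ∃ 𝓕 : Set (Set ℕ), NiceFamily 𝓕 ∧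
      FexLearnable none (some 2) 𝓕 ∧
      FexLearnable none none 𝓕 ∧
      ∀ i : ℕ, ¬ FexLearnable (some i) none 𝓕 :=
  ⟨icoComplements, niceFamily_icoComplements, fexLearnable_icoComplements (by simp),
    fexLearnable_icoComplements (by simp),
    fun _ ⟨_, _, hM⟩ => not_fexLearnsFamily_icoComplements hM⟩
end

section
/- Let M be a learner, let A and B be nonempty c.e. subsets of ℕ whose symmetric difference A △ B is infinite, and let σ be a finite sequence with content(σ) ⊆ A ∩ B. Suppose that W_{M(τ)} = W_{M(σ)} for every finite sequence τ extending σ with content(τ) ⊆ A ∪ B. Then M does not TxtFex*_*-learn the family {A, B} (and in particular does not TxtFext*_*-learn it): for at least one D ∈ {A, B}, M fails to TxtFex*_*-identify every text for D that extends σ. -/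
open Filter

/-!
Since `A △ B` is infinite, at least one `D ∈ {A, B}` differs infinitely from `W (M σ)`.
On any text for `D` that begins with `σ`, every later initial segment extends `σ` and has content
in `D ⊆ A ∪ B`, so every later conjecture codes `W (M σ)`; the finitely many conjectures the
learner eventually uses are then all wrong for `D`, even up to finite variants.
-/

theorem seg_prefix_seg (f : ℕ → ℕ) {m n : ℕ} (hmn : m ≤ n) : seg f m <+: seg f n := by
  obtain ⟨k, rfl⟩ := Nat.exists_eq_add_of_le hmn
  simp only [seg, List.range_add, List.map_append]
  exact List.prefix_append _ _

theorem content_seg_subset_range (f : ℕ → ℕ) (n : ℕ) : content (seg f n) ⊆ Set.range f := by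
  rintro _ hx
  obtain ⟨k, -, rfl⟩ := List.mem_map.mp hx
  exact Set.mem_range_self k

def concatText (σ : List ℕ) (g : ℕ → ℕ) (n : ℕ) : ℕ :=
  if h : n < σ.length then σ[n] else g (n - σ.length)

theorem seg_concatText_length (σ : List ℕ) (g : ℕ → ℕ) : seg (concatText σ g) σ.length = σ :=
  List.ext_getElem (by simp [seg]) fun i _ hi => by simp [seg, concatText, hi]

theorem range_concatText (σ : List ℕ) (g : ℕ → ℕ) :
    Set.range (concatText σ g) = content σ ∪ Set.range g := by
  apply Set.Subset.antisymm
  · rintro _ ⟨n, rfl⟩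
    by_cases h : n < σ.length
    · simp only [concatText, dif_pos h]
      exact Or.inl (List.getElem_mem h)
    · simp only [concatText, dif_neg h]
      exact Or.inr (Set.mem_range_self _)
  · rintro x (hx | ⟨n, rfl⟩)
    · obtain ⟨i, hi, rfl⟩ := List.getElem_of_mem hx
      exact ⟨i, by simp [concatText, hi]⟩
    · exact ⟨n + σ.length, by simp [concatText]⟩

theorem Accurate.eqStar {i : Option ℕ} {X Y : Set ℕ} (h : Accurate i X Y) : eqStar X Y := by
  cases i with
  | none => exact h
  | some i => exact h.1

theorem not_fexIdentifies_of_eventually_W_eq (i j : Option ℕ) {M : List ℕ → ℕ} {f : ℕ → ℕ}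
    {X : Set ℕ} (hW : ∀ᶠ n in atTop, W (M (seg f n)) = X)
    (hX : (symmDiff X (Set.range f)).Infinite) : ¬ FexIdentifies i j M f := by
  rintro ⟨S, -, hS, hacc⟩
  obtain ⟨n, hnS, hnX⟩ := (hS.and hW).exists
  exact hX (hnX ▸ (hacc _ hnS).eqStar)

theorem Set.Infinite.symmDiff_left_or_right {α : Type*} {A B : Set α}
    (hAB : (symmDiff A B).Infinite) (C : Set α) :
    (symmDiff A C).Infinite ∨ (symmDiff B C).Infinite := by
  by_contra! h
  refine hAB ((h.1.union ?_).subset (symmDiff_triangle A C B))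
  rw [symmDiff_comm]
  exact h.2

theorem exists_text_extending_not_fexIdentifies (i j : Option ℕ) {M : List ℕ → ℕ} {σ : List ℕ}
    {D : Set ℕ} (hD : D.Nonempty) (hσD : content σ ⊆ D)
    (hstab : ∀ τ : List ℕ, σ <+: τ → content τ ⊆ D → W (M τ) = W (M σ))
    (hinf : (symmDiff D (W (M σ))).Infinite) :
    ∃ f : ℕ → ℕ, Set.range f = D ∧ seg f σ.length = σ ∧ ¬ FexIdentifies i j M f := by
  obtain ⟨g, rfl⟩ := D.to_countable.exists_eq_range hD
  have hrange : Set.range (concatText σ g) = Set.range g := by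
    rw [range_concatText, Set.union_eq_right.mpr hσD]
  refine ⟨concatText σ g, hrange, seg_concatText_length σ g, ?_⟩
  refine not_fexIdentifies_of_eventually_W_eq i j ?_ (by rwa [symmDiff_comm, hrange])
  filter_upwards [eventually_ge_atTop σ.length] with n hn
  refine hstab _ ?_ (hrange ▸ content_seg_subset_range _ n)
  simpa only [seg_concatText_length] using seg_prefix_seg (concatText σ g) hn

theorem learner_fails_on_constant_cone_general (M : List ℕ → ℕ)
    (A B : Set ℕ) (hA : A.Nonempty) (hB : B.Nonempty)
    (hinf : (symmDiff A B).Infinite)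
    (σ : List ℕ) (hσ : content σ ⊆ A ∩ B)
    (hstab : ∀ τ : List ℕ, σ <+: τ → content τ ⊆ A ∪ B → W (M τ) = W (M σ)) :
    ∃ D ∈ ({A, B} : Set (Set ℕ)), ∃ f : ℕ → ℕ,
      Set.range f = D ∧ seg f σ.length = σ ∧ ¬ FexIdentifies none none M f := by
  rcases hinf.symmDiff_left_or_right (W (M σ)) with hAinf | hBinf
  · exact ⟨A, Or.inl rfl, exists_text_extending_not_fexIdentifies none none hA
      (fun x hx => (hσ hx).1)
      (fun τ hτ hτA => hstab τ hτ (hτA.trans Set.subset_union_left)) hAinf⟩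
  · exact ⟨B, Or.inr rfl, exists_text_extending_not_fexIdentifies none none hB
      (fun x hx => (hσ hx).2)
      (fun τ hτ hτB => hstab τ hτ (hτB.trans Set.subset_union_right)) hBinf⟩

/-- If `A △ B` is infinite, `content σ ⊆ A ∩ B`, and `M` outputs
hypotheses coding the single set `W (M σ)` on all extensions of `σ` with content in
`A ∪ B`, then `M` fails to TxtFex*_*-identify some text extending `σ` for one of `A, B`. -/
theorem learner_fails_on_constant_cone (M : List ℕ → ℕ) (hM : Computable M)
    (A B : Set ℕ) (hA : A.Nonempty) (hB : B.Nonempty)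
    (hAce : IsCE A) (hBce : IsCE B)
    (hinf : (symmDiff A B).Infinite)
    (σ : List ℕ) (hσ : content σ ⊆ A ∩ B)
    (hstab : ∀ τ : List ℕ, σ <+: τ → content τ ⊆ A ∪ B → W (M τ) = W (M σ)) :
    ∃ D ∈ ({A, B} : Set (Set ℕ)), ∃ f : ℕ → ℕ,
      Set.range f = D ∧ seg f σ.length = σ ∧ ¬ FexIdentifies none none M f :=
  learner_fails_on_constant_cone_general M A B hA hB hinf σ hσ hstab
end

section
/- Let L be an infinite c.e. subset of ℕ and let M be a learner. Suppose there is no finite sequence σ with content(σ) ⊆ L such that W_{M(τ₁)} = W_{M(τ₂)} for all finite sequences τ₁, τ₂ extending σ with content(τ₁), content(τ₂) ⊆ L. Then there exists a text f for L that M does not TxtFext*_*-identify; in particular, M does not TxtFext*_*-learn any family containing L. -/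
open Filter

/-!
Since no sequence with content in `L` is stabilizing, every such `σ` has an extension `τ`, still
with content in `L`, on which `M` conjectures a set different from `W (M σ)`. Starting from `[]`,
alternately pass to such an extension and append the next element of an enumeration of `L`. The
limit of this chain of prefixes is a text for `L` along which `W ∘ M` changes infinitely often,
so no finite set of conjectures all naming the same set can eventually contain all of `M`'s guesses.
-/

section PrefixLimit

variable {α : Type*}

/-- The limit of a prefix chain `s`; the default `d` is never used once `k < (s (k + 1)).length`. -/
def prefixLimit (d : α) (s : ℕ → List α) (k : ℕ) : α := (s (k + 1)).getD k d

theorem prefixLimit_eq_getElem (d : α) {s : ℕ → List α} (hs : ∀ n, s n <+: s (n + 1))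
    (hlen : ∀ n, n ≤ (s n).length) {l : List α} {n : ℕ} (hl : l <+: s n) {k : ℕ}
    (hk : k < l.length) : prefixLimit d s k = l[k] := by
  have hmono := Nat.rel_of_forall_rel_succ_of_le (· <+: ·) hs
  have hk' : k < (s (k + 1)).length := Nat.lt_of_lt_of_le k.lt_succ_self (hlen (k + 1))
  have h₁ := (hmono (le_max_right n (k + 1))).getElem hk'
  have h₂ := (hl.trans (hmono (le_max_left n (k + 1)))).getElem hk
  rw [prefixLimit, List.getD_eq_getElem _ _ hk', h₁, h₂]

theorem map_range_prefixLimit (d : α) {s : ℕ → List α} (hs : ∀ n, s n <+: s (n + 1))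
    (hlen : ∀ n, n ≤ (s n).length) {l : List α} {n : ℕ} (hl : l <+: s n) :
    (List.range l.length).map (prefixLimit d s) = l :=
  List.ext_getElem (by simp) fun k _ hk => by
    simp only [List.getElem_map, List.getElem_range]
    exact prefixLimit_eq_getElem d hs hlen hl hk

theorem mem_range_prefixLimit (d : α) {s : ℕ → List α} (hs : ∀ n, s n <+: s (n + 1))
    (hlen : ∀ n, n ≤ (s n).length) {x : α} :
    x ∈ Set.range (prefixLimit d s) ↔ ∃ n, x ∈ s n := by
  constructor
  · rintro ⟨k, rfl⟩
    have hk : k < (s (k + 1)).length := Nat.lt_of_lt_of_le k.lt_succ_self (hlen (k + 1))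
    exact ⟨k + 1, prefixLimit_eq_getElem d hs hlen (List.prefix_refl _) hk ▸ List.getElem_mem hk⟩
  · rintro ⟨n, hx⟩
    obtain ⟨k, hk, rfl⟩ := List.getElem_of_mem hx
    exact ⟨k, prefixLimit_eq_getElem d hs hlen (List.prefix_refl _) hk⟩

end PrefixLimit

section Weave

variable {α : Type*}

def weave (ext : List α → List α) (g : ℕ → α) : ℕ → List α
  | 0 => []
  | n + 1 => ext (weave ext g n) ++ [g n]

variable {ext : List α → List α} {g : ℕ → α}

theorem ext_weave_prefix_weave_succ (n : ℕ) : ext (weave ext g n) <+: weave ext g (n + 1) :=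
  List.prefix_append _ _

theorem weave_prefix_weave_succ (hext : ∀ σ, σ <+: ext σ) (n : ℕ) :
    weave ext g n <+: weave ext g (n + 1) :=
  (hext _).trans (ext_weave_prefix_weave_succ n)

theorem le_length_weave (hext : ∀ σ, σ <+: ext σ) (n : ℕ) : n ≤ (weave ext g n).length := by
  induction n with
  | zero => exact le_rfl
  | succ n ih =>
    simpa [weave] using ih.trans (hext (weave ext g n)).length_le

theorem mem_weave_succ (n : ℕ) : g n ∈ weave ext g (n + 1) := by
  simp [weave]

theorem mem_of_mem_weave {L : Set α} (hg : ∀ n, g n ∈ L)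
    (hext : ∀ σ : List α, (∀ x ∈ σ, x ∈ L) → ∀ x ∈ ext σ, x ∈ L) (n : ℕ) :
    ∀ x ∈ weave ext g n, x ∈ L := by
  induction n with
  | zero => simp [weave]
  | succ n ih =>
    intro x hx
    rcases List.mem_append.1 hx with hx | hx
    · exact hext _ ih x hx
    · exact List.mem_singleton.1 hx ▸ hg n

end Weave

theorem exists_text_through_extensions {L : Set ℕ} (hL : L.Nonempty) (ext : List ℕ → List ℕ)
    (hpre : ∀ σ, σ <+: ext σ) (hcont : ∀ σ, content σ ⊆ L → content (ext σ) ⊆ L) :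
    ∃ f : ℕ → ℕ, Set.range f = L ∧ ∀ N, ∃ σ : List ℕ, N ≤ σ.length ∧ content σ ⊆ L ∧
      seg f σ.length = σ ∧ seg f (ext σ).length = ext σ := by
  obtain ⟨g, rfl⟩ := (Set.to_countable L).exists_eq_range hL
  have hs := weave_prefix_weave_succ (g := g) hpre
  have hlen := le_length_weave (g := g) hpre
  have hweave : ∀ n, content (weave ext g n) ⊆ Set.range g :=
    mem_of_mem_weave (fun n => ⟨n, rfl⟩) hcont
  refine ⟨prefixLimit 0 (weave ext g), ?_, fun N => ⟨weave ext g N, hlen N, hweave N, ?_, ?_⟩⟩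
  · ext x
    rw [mem_range_prefixLimit 0 hs hlen]
    exact ⟨fun ⟨n, hx⟩ => hweave n hx, fun ⟨n, hx⟩ => ⟨n + 1, hx ▸ mem_weave_succ n⟩⟩
  · exact map_range_prefixLimit 0 hs hlen (List.prefix_refl _)
  · exact map_range_prefixLimit 0 hs hlen (ext_weave_prefix_weave_succ N)

theorem not_fextIdentifies_of_frequently_ne (i j : Option ℕ) {M : List ℕ → ℕ} {f : ℕ → ℕ}
    (h : ∀ N, ∃ m ≥ N, ∃ m' ≥ N, W (M (seg f m)) ≠ W (M (seg f m'))) :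
    ¬ FextIdentifies i j M f := by
  rintro ⟨S, -, hev, -, hW⟩
  obtain ⟨N, hN⟩ := eventually_atTop.1 hev
  obtain ⟨m, hm, m', hm', hne⟩ := h N
  exact hne (hW _ (hN m hm) _ (hN m' hm'))

theorem no_stabilizing_sequence_implies_failure_general (L : Set ℕ)
    (hLinf : L.Infinite) (M : List ℕ → ℕ)
    (hno : ¬ ∃ σ : List ℕ, content σ ⊆ L ∧
      ∀ τ₁ τ₂ : List ℕ, σ <+: τ₁ → σ <+: τ₂ →
        content τ₁ ⊆ L → content τ₂ ⊆ L → W (M τ₁) = W (M τ₂)) :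
    (∃ f : ℕ → ℕ, Set.range f = L ∧ ¬ FextIdentifies none none M f) ∧
    (∀ 𝓕 : Set (Set ℕ), L ∈ 𝓕 → ¬ FextLearnsFamily none none M 𝓕) := by
  push Not at hno
  have hstep : ∀ σ, ∃ τ, σ <+: τ ∧ (content σ ⊆ L → content τ ⊆ L ∧ W (M τ) ≠ W (M σ)) := by
    intro σ
    by_cases hσ : content σ ⊆ L
    · obtain ⟨τ₁, τ₂, h₁, h₂, hc₁, hc₂, hne⟩ := hno σ hσ
      rcases hne.ne_or_ne (W (M σ)) with hne | hne
      · exact ⟨τ₁, h₁, fun _ => ⟨hc₁, hne⟩⟩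
      · exact ⟨τ₂, h₂, fun _ => ⟨hc₂, hne⟩⟩
    · exact ⟨σ, List.prefix_refl σ, fun h => absurd h hσ⟩
  choose ext hpre hext using hstep
  obtain ⟨f, hf, hvisit⟩ :=
    exists_text_through_extensions hLinf.nonempty ext hpre fun σ hσ => (hext σ hσ).1
  have hfail : ¬ FextIdentifies none none M f := by
    refine not_fextIdentifies_of_frequently_ne none none fun N => ?_
    obtain ⟨σ, hN, hσL, hσ, hτ⟩ := hvisit N
    refine ⟨(ext σ).length, hN.trans (hpre σ).length_le, σ.length, hN, ?_⟩
    rw [hσ, hτ]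
    exact (hext σ hσL).2
  exact ⟨⟨f, hf, hfail⟩, fun 𝓕 hL hlearn => hfail (hlearn L hL f hf)⟩

/-- If no finite sequence with content in the infinite c.e. set `L`
stabilizes the hypotheses of `M` (in the sense that all extensions with content in `L`
code the same set), then some text for `L` is not TxtFext*_*-identified by `M`; in
particular `M` TxtFext*_*-learns no family containing `L`. -/
theorem no_stabilizing_sequence_implies_failure (L : Set ℕ) (hLce : IsCE L)
    (hLinf : L.Infinite) (M : List ℕ → ℕ) (hM : Computable M)
    (hno : ¬ ∃ σ : List ℕ, content σ ⊆ L ∧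
      ∀ τ₁ τ₂ : List ℕ, σ <+: τ₁ → σ <+: τ₂ →
        content τ₁ ⊆ L → content τ₂ ⊆ L → W (M τ₁) = W (M τ₂)) :
    (∃ f : ℕ → ℕ, Set.range f = L ∧ ¬ FextIdentifies none none M f) ∧
    (∀ 𝓕 : Set (Set ℕ), L ∈ 𝓕 → ¬ FextLearnsFamily none none M 𝓕) :=
  no_stabilizing_sequence_implies_failure_general L hLinf M hno
end
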